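/- There exist two central hyperplane arrangements 𝒜₁ and 𝒜₂ in ℂ³ with the same underlying matroid (same collection of dependent sets of defining linear forms) such that the degree-1 components of their inverse systems C_{𝒜₁,−ρ} and C_{𝒜₂,−ρ} have different dimensions (1 versus 0). Concretely, for m ≥ 3, take 3m planes: m generic planes through each of three lines L₁, L₂, L₃; if the Lᵢ are coplanar then dim(C_{𝒜,−2m})₁ = 1, and if not then dim(C_{𝒜,−2m})₁ = 0. -/

import Mathlib

open MvPolynomial

/-- The directional derivative ∂_h on polynomials on ℂᵈ. -/
noncomputable def dirDeriv {d : ℕ} (h : Fin d → ℂ) :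
    Module.End ℂ (MvPolynomial (Fin d) ℂ) :=
  ∑ i, h i • (pderiv i).toLinearMap

open Classical in
/-- ρ_𝒜(h): the number of hyperplanes of the arrangement not containing `h`. -/
noncomputable def rhoA {d n : ℕ} (L : Fin n → ((Fin d → ℂ) →ₗ[ℂ] ℂ)) (h : Fin d → ℂ) : ℕ :=
  (Finset.univ.filter fun i => L i h ≠ 0).card

/-- The degree-1 graded component of the inverse system C_{𝒜,k}:
homogeneous polynomials f of degree 1 with (∂_h)^{ρ_𝒜(h)+k+1} f = 0 for all h ≠ 0. -/
noncomputable def Cdeg1 {d n : ℕ} (L : Fin n → ((Fin d → ℂ) →ₗ[ℂ] ℂ)) (k : ℤ) :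
    Submodule ℂ (MvPolynomial (Fin d) ℂ) :=
  (homogeneousSubmodule (Fin d) ℂ 1) ⊓
    ⨅ (h : Fin d → ℂ) (_ : h ≠ 0),
      LinearMap.ker (dirDeriv h ^ (((rhoA L h : ℤ) + k + 1).toNat))

/-!
Both arrangements consist of three pencils of three planes, the planes of a pencil containing a
common line (its axis), chosen so that three of the normals are linearly dependent exactly when the
planes lie in one pencil; this determines the matroid, and it is checked on integer triple products.

For `h ≠ 0` the normals of the planes through `h` lie in the plane `h⊥`, so any three of them are
dependent and hence come from one pencil: at most three planes contain `h`, so `ρ(h) ≥ 6`, with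
equality only when `h` lies on an axis. A linear form `c ⬝ᵥ x` is killed by `∂_h²` for every `h`, while
`∂_h (c ⬝ᵥ x) = c ⬝ᵥ h`; hence it lies in `C_{𝒜,-6}` iff `c` is orthogonal to the three axes. With
the axes in the plane `x₂ = 0` this is the line spanned by `X 2`; for the coordinate axes it is `0`.
-/

open Matrix Finset

section InverseSystem

variable {d n : ℕ}

noncomputable def linearPoly (c : Fin d → ℂ) : MvPolynomial (Fin d) ℂ :=
  ∑ i, c i • X i

lemma mem_homogeneousSubmodule_one_iff {f : MvPolynomial (Fin d) ℂ} :
    f ∈ homogeneousSubmodule (Fin d) ℂ 1 ↔ ∃ c, linearPoly c = f := by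
  rw [homogeneousSubmodule_one_eq_span_X, Submodule.mem_span_range_iff_exists_fun]
  rfl

lemma dirDeriv_C (h : Fin d → ℂ) (a : ℂ) : dirDeriv h (C a) = 0 := by
  simp [dirDeriv]

lemma dirDeriv_linearPoly (h c : Fin d → ℂ) : dirDeriv h (linearPoly c) = C (c ⬝ᵥ h) := by
  simp [dirDeriv, linearPoly, pderiv_X, Pi.single_apply, dotProduct, smul_eq_C_mul, mul_comm]

lemma dirDeriv_pow_linearPoly {e : ℕ} (he : 2 ≤ e) (h c : Fin d → ℂ) :
    (dirDeriv h ^ e) (linearPoly c) = 0 := by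
  obtain ⟨e, rfl⟩ := Nat.exists_eq_add_of_le' he
  rw [pow_succ, pow_succ, Module.End.mul_apply, Module.End.mul_apply, dirDeriv_linearPoly,
    dirDeriv_C, map_zero]

lemma mem_Cdeg1_iff {L : Fin n → (Fin d → ℂ) →ₗ[ℂ] ℂ} {k : ℤ}
    (hρ : ∀ h, h ≠ 0 → -k ≤ rhoA L h) {f : MvPolynomial (Fin d) ℂ} :
    f ∈ Cdeg1 L k ↔
      ∃ c, linearPoly c = f ∧ ∀ h, h ≠ 0 → (rhoA L h : ℤ) = -k → c ⬝ᵥ h = 0 := by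
  simp only [Cdeg1, Submodule.mem_inf, Submodule.mem_iInf, LinearMap.mem_ker,
    mem_homogeneousSubmodule_one_iff]
  constructor
  · rintro ⟨⟨c, rfl⟩, hc⟩
    refine ⟨c, rfl, fun h hh hρh => ?_⟩
    have := hc h hh
    rwa [hρh, show (-k + k + 1).toNat = 1 by omega, pow_one, dirDeriv_linearPoly, C_eq_zero] at this
  · rintro ⟨c, rfl, hc⟩
    refine ⟨⟨c, rfl⟩, fun h hh => ?_⟩
    rcases (hρ h hh).eq_or_lt with hρh | hρh
    · rw [← hρh, show (-k + k + 1).toNat = 1 by omega, pow_one, dirDeriv_linearPoly,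
        hc h hh hρh.symm, map_zero]
    · exact dirDeriv_pow_linearPoly (by omega) h c

end InverseSystem

section Arrangement

variable {d n : ℕ}

noncomputable def dotProductForms (v : Fin n → Fin d → ℂ) : Fin n → (Fin d → ℂ) →ₗ[ℂ] ℂ :=
  fun i => dotProductEquiv ℂ (Fin d) (v i)

lemma linearIndepOn_dotProductForms_iff {v : Fin n → Fin d → ℂ} {s : Set (Fin n)} :
    LinearIndepOn ℂ (dotProductForms v) s ↔ LinearIndepOn ℂ v s :=
  (dotProductEquiv ℂ (Fin d)).toLinearMap.linearIndependent_iff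
    (LinearEquiv.ker (dotProductEquiv ℂ (Fin d)))

lemma rhoA_add_card_filter_eq_zero (L : Fin n → (Fin d → ℂ) →ₗ[ℂ] ℂ) (h : Fin d → ℂ) :
    rhoA L h + #{i | L i h = 0} = n := by
  classical
  rw [rhoA, add_comm]
  convert card_filter_add_card_filter_not (s := univ) (fun i => L i h = 0)
  simp

lemma rhoA_dotProductForms_add_card (v : Fin n → Fin d → ℂ) (h : Fin d → ℂ) :
    rhoA (dotProductForms v) h + #{i | v i ⬝ᵥ h = 0} = n := by
  convert rhoA_add_card_filter_eq_zero (dotProductForms v) h using 4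
  exact Iff.rfl

end Arrangement

section Triples

variable {K ι : Type*} [Field K] {v : ι → Fin 3 → K}

lemma linearIndepOn_triple_iff_det {i j k : ι} (hij : i ≠ j) (hik : i ≠ k) (hjk : j ≠ k) :
    LinearIndepOn K v {i, j, k} ↔ det ![v i, v j, v k] ≠ 0 := by
  have hinj : Function.Injective ![i, j, k] := by
    intro a b hab
    fin_cases a <;> fin_cases b <;> simp_all [eq_comm]
  have hrange : ({i, j, k} : Set ι) = Set.range ![i, j, k] := by
    ext; simp; tauto
  rw [hrange, linearIndepOn_range_iff hinj]
  calc LinearIndependent K (v ∘ ![i, j, k])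
      ↔ LinearIndependent K (of ![v i, v j, v k]).row := by
        convert Iff.rfl
        ext r
        fin_cases r <;> rfl
    _ ↔ det ![v i, v j, v k] ≠ 0 := by
        rw [linearIndependent_rows_iff_isUnit, isUnit_iff_isUnit_det, isUnit_iff_ne_zero]
        rfl

lemma det_eq_zero_of_dotProduct_eq_zero {u w x h : Fin 3 → K} (hh : h ≠ 0)
    (hu : u ⬝ᵥ h = 0) (hw : w ⬝ᵥ h = 0) (hx : x ⬝ᵥ h = 0) : det ![u, w, x] = 0 :=
  exists_mulVec_eq_zero_iff.1 ⟨h, hh, by ext r; fin_cases r <;> assumption⟩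

end Triples

section Pencils

variable {ι κ : Type*}

lemma Finset.apply_eq_of_three_le_card {s : Finset ι} {f : ι → κ} (hs : 3 ≤ s.card)
    (hf : ∀ i ∈ s, ∀ j ∈ s, ∀ k ∈ s, i ≠ j → i ≠ k → j ≠ k → f i = f j)
    {i j : ι} (hi : i ∈ s) (hj : j ∈ s) : f i = f j := by
  classical
  obtain rfl | hij := eq_or_ne i j
  · rfl
  obtain ⟨k, hk⟩ : ((s.erase i).erase j).Nonempty := by
    rw [← card_pos, card_erase_of_mem (mem_erase.2 ⟨hij.symm, hj⟩),
      card_erase_of_mem hi]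
    omega
  simp only [mem_erase] at hk
  exact hf i hi j hj k hk.2.2 hij hk.2.1.symm hk.1.symm

variable {g : ι → κ}

lemma exists_triple_superset [Nontrivial ι]
    (hext : ∀ i j, i ≠ j → ∃ k, i ≠ k ∧ j ≠ k ∧ ¬(g i = g j ∧ g j = g k))
    {s : Set ι} (hsf : s.Finite) (hs : s.ncard ≤ 3)
    (hgood : ∀ i ∈ s, ∀ j ∈ s, ∀ k ∈ s, i ≠ j → i ≠ k → j ≠ k → ¬(g i = g j ∧ g j = g k)) :
    ∃ i j k, i ≠ j ∧ i ≠ k ∧ j ≠ k ∧ ¬(g i = g j ∧ g j = g k) ∧ s ⊆ {i, j, k} := by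
  have of_pair {i j : ι} (hij : i ≠ j) (hsub : s ⊆ {i, j}) :
      ∃ i j k, i ≠ j ∧ i ≠ k ∧ j ≠ k ∧ ¬(g i = g j ∧ g j = g k) ∧ s ⊆ {i, j, k} := by
    obtain ⟨k, hik, hjk, hk⟩ := hext i j hij
    exact ⟨i, j, k, hij, hik, hjk, hk,
      hsub.trans (Set.insert_subset_insert (Set.singleton_subset_iff.2 (Set.mem_insert _ _)))⟩
  interval_cases hcard : s.ncard
  · obtain ⟨i, j, hij⟩ := exists_pair_ne ι
    exact of_pair hij (by simp [(Set.ncard_eq_zero hsf).1 hcard])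
  · obtain ⟨i, rfl⟩ := Set.ncard_eq_one.1 hcard
    obtain ⟨j, hj⟩ := exists_ne i
    exact of_pair hj.symm (by simp)
  · obtain ⟨i, j, hij, rfl⟩ := Set.ncard_eq_two.1 hcard
    exact of_pair hij subset_rfl
  · obtain ⟨i, j, k, hij, hik, hjk, rfl⟩ := Set.ncard_eq_three.1 hcard
    exact ⟨i, j, k, hij, hik, hjk, hgood i (by simp) j (by simp) k (by simp) hij hik hjk,
      subset_rfl⟩

variable {K : Type*} [Field K] {v : ι → Fin 3 → K}

lemma linearIndepOn_iff_of_det_eq_zero_iff [Finite ι] [Nontrivial ι]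
    (hv : ∀ i j k, i ≠ j → i ≠ k → j ≠ k → (det ![v i, v j, v k] = 0 ↔ g i = g j ∧ g j = g k))
    (hext : ∀ i j, i ≠ j → ∃ k, i ≠ k ∧ j ≠ k ∧ ¬(g i = g j ∧ g j = g k)) (s : Set ι) :
    LinearIndepOn K v s ↔ s.ncard ≤ 3 ∧
      ∀ i ∈ s, ∀ j ∈ s, ∀ k ∈ s, i ≠ j → i ≠ k → j ≠ k → ¬(g i = g j ∧ g j = g k) := by
  constructor
  · intro hs
    refine ⟨?_, fun i hi j hj k hk hij hik hjk => ?_⟩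
    · have := s.toFinite.fintype
      have hcard := hs.fintype_card_le_finrank
      rwa [Module.finrank_fin_fun, ← Nat.card_eq_fintype_card, Nat.card_coe_set_eq] at hcard
    · rw [← hv i j k hij hik hjk, ← ne_eq, ← linearIndepOn_triple_iff_det hij hik hjk]
      exact hs.mono (by simp [Set.insert_subset_iff, hi, hj, hk])
  · rintro ⟨hs, hgood⟩
    obtain ⟨i, j, k, hij, hik, hjk, hbad, hsub⟩ := exists_triple_superset hext s.toFinite hs hgood
    rw [← hv i j k hij hik hjk, ← ne_eq, ← linearIndepOn_triple_iff_det hij hik hjk] at hbad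
    exact hbad.mono hsub

end Pencils

section ZeroSets

variable {κ : Type*} {n : ℕ} {g : Fin n → κ} {v : Fin n → Fin 3 → ℂ}

lemma pencil_eq_of_dotProduct_eq_zero
    (hv : ∀ i j k, i ≠ j → i ≠ k → j ≠ k → (det ![v i, v j, v k] = 0 ↔ g i = g j ∧ g j = g k))
    {h : Fin 3 → ℂ} (hh : h ≠ 0) (hZ : 3 ≤ #{i | v i ⬝ᵥ h = 0}) {i j : Fin n}
    (hi : v i ⬝ᵥ h = 0) (hj : v j ⬝ᵥ h = 0) : g i = g j := by
  refine apply_eq_of_three_le_card hZ (fun i hi j hj k hk hij hik hjk => ?_)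
    (by simpa using hi) (by simpa using hj)
  simp only [mem_filter, mem_univ, true_and] at hi hj hk
  exact ((hv i j k hij hik hjk).1 (det_eq_zero_of_dotProduct_eq_zero hh hi hj hk)).1

lemma card_filter_dotProduct_eq_zero_le [DecidableEq κ]
    (hv : ∀ i j k, i ≠ j → i ≠ k → j ≠ k → (det ![v i, v j, v k] = 0 ↔ g i = g j ∧ g j = g k))
    {m : ℕ} (hm : 2 ≤ m) (hg : ∀ a, #{i | g i = a} ≤ m) {h : Fin 3 → ℂ} (hh : h ≠ 0) :
    #{i | v i ⬝ᵥ h = 0} ≤ m := by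
  by_contra! hlt
  obtain ⟨i, hi⟩ : ({i | v i ⬝ᵥ h = 0} : Finset (Fin n)).Nonempty := by
    rw [← card_pos]; omega
  have hsub : ({i | v i ⬝ᵥ h = 0} : Finset (Fin n)) ⊆ ({j | g j = g i} : Finset (Fin n)) := by
    intro j hj
    simp only [mem_filter, mem_univ, true_and] at hi hj ⊢
    exact pencil_eq_of_dotProduct_eq_zero hv hh (by omega) hj hi
  exact (card_le_card hsub).trans (hg (g i)) |>.not_gt hlt

end ZeroSets

section IntegerArrangements

variable {n : ℕ}

lemma det_intCast {K : Type*} [CommRing K] (u w x : Fin 3 → ℤ) :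
    det ![Int.cast ∘ u, Int.cast ∘ w, Int.cast ∘ x] = ((u ⬝ᵥ w ⨯₃ x : ℤ) : K) := by
  rw [triple_product_eq_det]
  refine Eq.symm <| (Int.cast_det _).trans ?_
  congr 1
  ext r t
  fin_cases r <;> rfl

noncomputable def intForms (W : Fin n → Fin 3 → ℤ) : Fin n → (Fin 3 → ℂ) →ₗ[ℂ] ℂ :=
  dotProductForms fun i => Int.cast ∘ W i

lemma rhoA_intForms_single (W : Fin n → Fin 3 → ℤ) (t : Fin 3) :
    rhoA (intForms W) (Pi.single t 1) + #{i | W i t = 0} = n := by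
  rw [intForms]
  convert rhoA_dotProductForms_add_card (fun i => Int.cast ∘ W i) (Pi.single t 1) using 4 with i
  rw [dotProduct_single_one, Function.comp_apply, Int.cast_eq_zero]

def pencil (i : Fin 9) : Fin 3 := ⟨i / 3, by omega⟩

lemma card_pencil (a : Fin 3) : #{i | pencil i = a} = 3 := by
  revert a; decide

lemma exists_not_samePencil :
    ∀ i j, i ≠ j → ∃ k, i ≠ k ∧ j ≠ k ∧ ¬(pencil i = pencil j ∧ pencil j = pencil k) := by
  decide

variable {W : Fin 9 → Fin 3 → ℤ}
  (hW : ∀ i j k, i ≠ j → i ≠ k → j ≠ k →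
    (W i ⬝ᵥ W j ⨯₃ W k = 0 ↔ pencil i = pencil j ∧ pencil j = pencil k))
include hW

lemma det_intCast_eq_zero_iff (i j k : Fin 9) (hij : i ≠ j) (hik : i ≠ k) (hjk : j ≠ k) :
    det ![Int.cast ∘ W i, Int.cast ∘ W j, Int.cast ∘ W k] = (0 : ℂ) ↔
      pencil i = pencil j ∧ pencil j = pencil k := by
  rw [det_intCast, Int.cast_eq_zero, hW i j k hij hik hjk]

lemma linearIndepOn_intForms_iff (s : Set (Fin 9)) :
    LinearIndepOn ℂ (intForms W) s ↔ s.ncard ≤ 3 ∧ ∀ i ∈ s, ∀ j ∈ s, ∀ k ∈ s,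
      i ≠ j → i ≠ k → j ≠ k → ¬(pencil i = pencil j ∧ pencil j = pencil k) := by
  rw [intForms, linearIndepOn_dotProductForms_iff]
  exact linearIndepOn_iff_of_det_eq_zero_iff (det_intCast_eq_zero_iff hW) exists_not_samePencil s

lemma intForms_ne_zero (i : Fin 9) : intForms W i ≠ 0 :=
  ((linearIndepOn_intForms_iff hW {i}).2 ⟨by simp, by simp⟩).ne_zero rfl

lemma six_le_rhoA_intForms {h : Fin 3 → ℂ} (hh : h ≠ 0) : 6 ≤ rhoA (intForms W) h := by
  have hZ := card_filter_dotProduct_eq_zero_le (det_intCast_eq_zero_iff hW) (m := 3) (by norm_num)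
    (fun a => (card_pencil a).le) hh
  have := rhoA_dotProductForms_add_card (fun i => Int.cast ∘ W i) h
  rw [← intForms] at this
  omega

lemma exists_ne_samePencil_of_rhoA_eq_six {h : Fin 3 → ℂ} (hh : h ≠ 0)
    (hρ : rhoA (intForms W) h = 6) : ∃ i j, i ≠ j ∧ pencil i = pencil j ∧
      (Int.cast ∘ W i) ⬝ᵥ h = 0 ∧ (Int.cast ∘ W j) ⬝ᵥ h = 0 := by
  have hZ := rhoA_dotProductForms_add_card (fun i => Int.cast ∘ W i) h
  rw [← intForms] at hZ
  obtain ⟨i, hi, j, hj, hij⟩ := one_lt_card.1 (show 1 < #{i | (Int.cast ∘ W i) ⬝ᵥ h = 0} by omega)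
  simp only [mem_filter, mem_univ, true_and] at hi hj
  exact ⟨i, j, hij,
    pencil_eq_of_dotProduct_eq_zero (det_intCast_eq_zero_iff hW) hh (by omega) hi hj, hi, hj⟩

end IntegerArrangements

section Examples

/- Row `i` is the normal of a plane through the axis of pencil `i / 3`; the axes are
`e₀, e₁, e₀ + e₁` for `coplanarNormals` and `e₀, e₁, e₂` for `skewNormals`. -/
def coplanarNormals : Fin 9 → Fin 3 → ℤ :=
  ![![0, 1, 1], ![0, 1, 2], ![0, 1, 3],
    ![1, 0, 1], ![1, 0, 2], ![1, 0, 3],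
    ![1, -1, 4], ![1, -1, 5], ![1, -1, 6]]

def skewNormals : Fin 9 → Fin 3 → ℤ :=
  ![![0, 1, 1], ![0, 1, 2], ![0, 1, 3],
    ![1, 0, 1], ![1, 0, 2], ![1, 0, 3],
    ![1, 4, 0], ![1, 5, 0], ![1, 6, 0]]

lemma coplanarNormals_cross_eq_zero_iff : ∀ i j k, i ≠ j → i ≠ k → j ≠ k →
    (coplanarNormals i ⬝ᵥ coplanarNormals j ⨯₃ coplanarNormals k = 0 ↔
      pencil i = pencil j ∧ pencil j = pencil k) := by
  decide

lemma skewNormals_cross_eq_zero_iff : ∀ i j k, i ≠ j → i ≠ k → j ≠ k →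
    (skewNormals i ⬝ᵥ skewNormals j ⨯₃ skewNormals k = 0 ↔
      pencil i = pencil j ∧ pencil j = pencil k) := by
  decide

lemma coplanarNormals_sub_of_pencil_eq : ∀ i j, i ≠ j → pencil i = pencil j →
    coplanarNormals i 0 = coplanarNormals j 0 ∧ coplanarNormals i 1 = coplanarNormals j 1 ∧
      coplanarNormals i 2 ≠ coplanarNormals j 2 := by
  decide

lemma rhoA_coplanar_single {t : Fin 3} (ht : t ≠ 2) :
    rhoA (intForms coplanarNormals) (Pi.single t 1) = 6 := by
  have hcount : #{i | coplanarNormals i t = 0} = 3 := by revert t; decide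
  have := rhoA_intForms_single coplanarNormals t
  omega

lemma rhoA_skew_single (t : Fin 3) : rhoA (intForms skewNormals) (Pi.single t 1) = 6 := by
  have hcount : #{i | skewNormals i t = 0} = 3 := by revert t; decide
  have := rhoA_intForms_single skewNormals t
  omega

lemma coplanar_apply_two_eq_zero {h : Fin 3 → ℂ} (hh : h ≠ 0)
    (hρ : rhoA (intForms coplanarNormals) h = 6) : h 2 = 0 := by
  obtain ⟨i, j, hij, hpen, hi, hj⟩ :=
    exists_ne_samePencil_of_rhoA_eq_six coplanarNormals_cross_eq_zero_iff hh hρ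
  obtain ⟨h0, h1, h2⟩ := coplanarNormals_sub_of_pencil_eq i j hij hpen
  simp only [dotProduct, Fin.sum_univ_three, Function.comp_apply, h0, h1] at hi hj
  have : ((coplanarNormals i 2 - coplanarNormals j 2 : ℤ) : ℂ) * h 2 = 0 := by
    push_cast
    linear_combination hi - hj
  exact (mul_eq_zero.1 this).resolve_left (by exact_mod_cast sub_ne_zero.2 h2)

lemma Cdeg1_coplanar : Cdeg1 (intForms coplanarNormals) (-6) = ℂ ∙ X 2 := by
  ext f
  rw [mem_Cdeg1_iff (fun h hh => by
    have := six_le_rhoA_intForms coplanarNormals_cross_eq_zero_iff hh; omega),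
    Submodule.mem_span_singleton]
  constructor
  · rintro ⟨c, rfl, hc⟩
    have hc0 : c 0 = 0 := by
      simpa using hc (Pi.single 0 1) (by simp) (by rw [rhoA_coplanar_single (by decide)]; rfl)
    have hc1 : c 1 = 0 := by
      simpa using hc (Pi.single 1 1) (by simp) (by rw [rhoA_coplanar_single (by decide)]; rfl)
    exact ⟨c 2, by simp [linearPoly, Fin.sum_univ_three, hc0, hc1]⟩
  · rintro ⟨a, rfl⟩
    refine ⟨Pi.single 2 a, by simp [linearPoly, Pi.single_apply], fun h hh hρ => ?_⟩
    rw [single_dotProduct, coplanar_apply_two_eq_zero hh (by omega), mul_zero]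

lemma Cdeg1_skew : Cdeg1 (intForms skewNormals) (-6) = ⊥ := by
  ext f
  rw [mem_Cdeg1_iff (fun h hh => by
    have := six_le_rhoA_intForms skewNormals_cross_eq_zero_iff hh; omega),
    Submodule.mem_bot]
  constructor
  · rintro ⟨c, rfl, hc⟩
    have hc_apply (t : Fin 3) : c t = 0 := by
      simpa using hc (Pi.single t 1) (by simp) (by rw [rhoA_skew_single]; rfl)
    simp [linearPoly, hc_apply]
  · rintro rfl
    exact ⟨0, by simp [linearPoly], by simp⟩

end Examples

/-- there are two central arrangements in ℂ³ with the same matroid, the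
same ρ = 2m (with k = −2m ≤ −6), but whose inverse systems C_{𝒜,−ρ} have degree-1
components of different dimensions (1 versus 0). -/
theorem stmt_8 :
    ∃ (m : ℕ), 3 ≤ m ∧
    ∃ (L₁ L₂ : Fin (3 * m) → ((Fin 3 → ℂ) →ₗ[ℂ] ℂ)),
      (∀ i, L₁ i ≠ 0) ∧ (∀ i, L₂ i ≠ 0) ∧
      -- same matroid: the same subsets of forms are linearly dependent
      (∀ s : Set (Fin (3 * m)),
        LinearIndependent ℂ (fun i : s => L₁ i) ↔ LinearIndependent ℂ (fun i : s => L₂ i)) ∧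
      -- both arrangements have ρ = 2m
      (∀ h : Fin 3 → ℂ, h ≠ 0 → 2 * m ≤ rhoA L₁ h) ∧
      (∃ h : Fin 3 → ℂ, h ≠ 0 ∧ rhoA L₁ h = 2 * m) ∧
      (∀ h : Fin 3 → ℂ, h ≠ 0 → 2 * m ≤ rhoA L₂ h) ∧
      (∃ h : Fin 3 → ℂ, h ≠ 0 ∧ rhoA L₂ h = 2 * m) ∧
      -- but the degree-1 components of C_{𝒜,−2m} have different dimensions
      Module.finrank ℂ (Cdeg1 L₁ (-(2 * m : ℤ))) = 1 ∧
      Module.finrank ℂ (Cdeg1 L₂ (-(2 * m : ℤ))) = 0 := by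
  have hW₁ := coplanarNormals_cross_eq_zero_iff
  have hW₂ := skewNormals_cross_eq_zero_iff
  have hk : (-(2 * ((3 : ℕ) : ℤ))) = -6 := by norm_num
  refine ⟨3, le_rfl, intForms coplanarNormals, intForms skewNormals,
    intForms_ne_zero hW₁, intForms_ne_zero hW₂,
    fun s => (linearIndepOn_intForms_iff hW₁ s).trans (linearIndepOn_intForms_iff hW₂ s).symm,
    fun h hh => six_le_rhoA_intForms hW₁ hh,
    ⟨Pi.single 0 1, by simp, rhoA_coplanar_single (by decide)⟩,
    fun h hh => six_le_rhoA_intForms hW₂ hh, ⟨Pi.single 0 1, by simp, rhoA_skew_single 0⟩, ?_, ?_⟩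
  · rw [hk, Cdeg1_coplanar]
    exact finrank_span_singleton (X_ne_zero 2)
  · rw [hk, Cdeg1_skew]
    exact finrank_bot ℂ _
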